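/- There is no finite simple nonabelian group G whose same-size conjugacy class set is {1, 2q, 8pq, 8q, 16p} for distinct odd primes p and q. -/
import Mathlib

open scoped MatrixGroups

/-- The size of the conjugacy class of `x`. -/
noncomputable def classSize {G : Type*} [Group G] (x : G) : ℕ :=
  Nat.card {y : G // IsConj x y}

/-- `u_G(n)`: the number of elements of `G` whose conjugacy class has size `n`. -/
noncomputable def sameSizeCount (G : Type*) [Group G] (n : ℕ) : ℕ :=
  Nat.card {x : G // classSize x = n}

/-- `U(G)`: the same-size conjugacy class set of `G`. -/
def sameSizeSet (G : Type*) [Group G] : Set ℕ :=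
  {m | ∃ x : G, m = sameSizeCount G (classSize x)}

section Aux
variable {G : Type*} [Group G]

lemma classSize_eq_of_isConj {x y : G} (h : IsConj x y) : classSize x = classSize y :=
  Nat.card_congr (Equiv.subtypeEquivRight fun _ => ⟨fun hz => h.symm.trans hz, fun hz => h.trans hz⟩)

lemma classSize_one : classSize (1 : G) = 1 := by
  have : ∀ y : G, IsConj 1 y ↔ y = 1 := fun y => by
    rw [isConj_one_right]
  rw [classSize, Nat.card_congr (Equiv.subtypeEquivRight this), Nat.card_eq_one_iff_unique]
  exact ⟨⟨fun a b => Subtype.ext (a.2.trans b.2.symm)⟩, ⟨⟨1, rfl⟩⟩⟩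

lemma classSize_dvd_card [Finite G] (x : G) : classSize x ∣ Nat.card G := by
  classical
  cases nonempty_fintype G
  have h := MulAction.card_orbit_mul_card_stabilizer_eq_card_group (ConjAct G) x
  have h1 : classSize x = Fintype.card (MulAction.orbit (ConjAct G) x) := by
    rw [classSize, ← Nat.card_eq_fintype_card]
    refine Nat.card_congr (Equiv.subtypeEquivRight fun y => ?_)
    rw [ConjAct.mem_orbit_conjAct, isConj_comm]
  have h2 : Nat.card G = Fintype.card (ConjAct G) := by
    rw [Nat.card_eq_fintype_card]
    exact Fintype.card_congr ConjAct.toConjAct.toEquiv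
  rw [h1, h2, ← h]
  exact Dvd.intro _ rfl

lemma sameSizeCount_eq_filter_card [Fintype G] (n : ℕ) :
    sameSizeCount G n = (Finset.univ.filter fun x : G => classSize x = n).card := by
  classical
  rw [sameSizeCount, Nat.card_eq_fintype_card, Fintype.card_subtype]

lemma classSize_dvd_sameSizeCount [Finite G] (x : G) :
    classSize x ∣ sameSizeCount G (classSize x) := by
  classical
  cases nonempty_fintype G
  set n := classSize x with hn
  rw [sameSizeCount_eq_filter_card]
  set s : Finset G := Finset.univ.filter fun z => classSize z = n with hs
  rw [Finset.card_eq_sum_card_fiberwise (f := ConjClasses.mk)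
    (t := s.image ConjClasses.mk) (fun z hz => Finset.mem_image_of_mem _ hz)]
  refine Finset.dvd_sum fun c hc => ?_
  obtain ⟨y, hy, hyc⟩ := Finset.mem_image.mp hc
  rw [hs, Finset.mem_filter] at hy
  have key : (s.filter fun z => ConjClasses.mk z = c) =
      Finset.univ.filter fun z => ConjClasses.mk z = c := by
    ext z
    simp only [hs, Finset.mem_filter, Finset.mem_univ, true_and]
    refine ⟨fun h => h.2, fun h => ⟨?_, h⟩⟩
    have : IsConj y z := ConjClasses.mk_eq_mk_iff_isConj.mp (hyc.trans h.symm)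
    rw [← classSize_eq_of_isConj this, hy.2]
  rw [key]
  have : (Finset.univ.filter fun z => ConjClasses.mk z = c).card = n := by
    rw [← Fintype.card_subtype, ← Nat.card_eq_fintype_card, ← hy.2]
    refine Nat.card_congr (Equiv.subtypeEquivRight fun z => ?_).symm
    rw [← hyc, ConjClasses.mk_eq_mk_iff_isConj, isConj_comm]
  rw [this]

lemma classSize_eq_one_iff [Finite G] {x : G} :
    classSize x = 1 ↔ x ∈ Subgroup.center G := by
  constructor
  · intro h
    rw [classSize, Nat.card_eq_one_iff_unique] at h
    rw [Subgroup.mem_center_iff]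
    intro g
    haveI := h.1
    have h1 : (⟨g * x * g⁻¹, isConj_iff.mpr ⟨g, rfl⟩⟩ : {y : G // IsConj x y}) =
        ⟨x, IsConj.refl x⟩ := Subsingleton.elim _ _
    have := Subtype.ext_iff.mp h1
    simp only at this
    calc g * x = g * x * g⁻¹ * g := by group
      _ = x * g := by rw [this]
  · intro h
    have : ∀ y : G, IsConj x y ↔ y = x := fun y => by
      constructor
      · rintro hc
        obtain ⟨g, hg⟩ := isConj_iff.mp hc
        rw [← hg, Subgroup.mem_center_iff.mp h g]
        group
      · rintro rfl; exact IsConj.refl _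
    rw [classSize, Nat.card_congr (Equiv.subtypeEquivRight this),
      Nat.card_eq_one_iff_unique]
    exact ⟨⟨fun a b => Subtype.ext (a.2.trans b.2.symm)⟩, ⟨⟨x, rfl⟩⟩⟩

end Aux

theorem stmt_7 (p q : ℕ) (hp : p.Prime) (hq : q.Prime) (hop : Odd p)
    (hoq : Odd q) (hpq : p ≠ q) (G : Type*) [Group G] [Finite G]
    [IsSimpleGroup G] (hna : ¬ ∀ a b : G, a * b = b * a) :
    sameSizeSet G ≠ {1, 2 * q, 8 * p * q, 8 * q, 16 * p} := by
  classical
  intro h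
  cases nonempty_fintype G
  -- trivial center
  have hcenter : Subgroup.center G = ⊥ := by
    rcases IsSimpleGroup.eq_bot_or_eq_top_of_normal (Subgroup.center G) inferInstance with
      h1 | h1
    · exact h1
    · exact absurd (fun a b => Subgroup.mem_center_iff.mp (h1 ▸ Subgroup.mem_top b) a) hna
  have hone : ∀ x : G, classSize x = 1 ↔ x = 1 := fun x => by
    rw [classSize_eq_one_iff, hcenter, Subgroup.mem_bot]
  have hc1 : sameSizeCount G 1 = 1 := by
    rw [sameSizeCount, Nat.card_eq_one_iff_unique]
    refine ⟨⟨fun a b => Subtype.ext ?_⟩, ⟨⟨1, classSize_one⟩⟩⟩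
    rw [(hone a.1).mp a.2, (hone b.1).mp b.2]
  have hne1 : ∀ x : G, classSize x ≠ 1 → sameSizeCount G (classSize x) ≠ 1 := by
    intro x hx hcount
    exact hx (Nat.dvd_one.mp (hcount ▸ classSize_dvd_sameSizeCount x))
  have heven : ∀ x : G, classSize x ≠ 1 → 2 ∣ sameSizeCount G (classSize x) := by
    intro x hx
    have hmem : sameSizeCount G (classSize x) ∈ ({1, 2 * q, 8 * p * q, 8 * q, 16 * p} : Set ℕ) :=
      h ▸ ⟨x, rfl⟩
    simp only [Set.mem_insert_iff, Set.mem_singleton_iff] at hmem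
    rcases hmem with h' | h' | h' | h' | h'
    · exact absurd h' (hne1 x hx)
    · exact ⟨q, h'⟩
    · exact ⟨4 * p * q, by rw [h']; ring⟩
    · exact ⟨4 * q, by rw [h']; ring⟩
    · exact ⟨8 * p, by rw [h']; ring⟩
  -- |G| is odd
  have hodd : Odd (Nat.card G) := by
    rw [Nat.card_eq_fintype_card, ← Finset.card_univ,
      Finset.card_eq_sum_card_fiberwise (f := classSize) (t := Finset.univ.image classSize)
        (fun x _ => Finset.mem_image_of_mem _ (Finset.mem_univ x))]
    have h1mem : (1 : ℕ) ∈ Finset.univ.image (classSize (G := G)) :=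
      Finset.mem_image.mpr ⟨1, Finset.mem_univ _, classSize_one⟩
    rw [← Finset.insert_erase h1mem, Finset.sum_insert (Finset.notMem_erase _ _)]
    have hterm1 : (Finset.univ.filter fun x : G => classSize x = 1).card = 1 := by
      rw [← sameSizeCount_eq_filter_card]; exact hc1
    have heven' : 2 ∣ ∑ n ∈ (Finset.univ.image (classSize (G := G))).erase 1,
        (Finset.univ.filter fun x : G => classSize x = n).card := by
      refine Finset.dvd_sum fun n hn => ?_
      obtain ⟨x, -, hx⟩ := Finset.mem_image.mp (Finset.mem_of_mem_erase hn)
      have hne : classSize x ≠ 1 := by rw [hx]; exact Finset.ne_of_mem_erase hn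
      rw [← sameSizeCount_eq_filter_card, ← hx]
      exact heven x hne
    rw [hterm1]
    obtain ⟨k, hk⟩ := heven'
    exact ⟨k, by rw [hk]; ring⟩
  -- key extraction
  have key : ∀ v : ℕ, v ∈ ({1, 2 * q, 8 * p * q, 8 * q, 16 * p} : Set ℕ) →
      ∃ n : ℕ, n ∣ v ∧ ¬ 2 ∣ n ∧ v = sameSizeCount G n := by
    intro v hv
    rw [← h] at hv
    obtain ⟨x, hx⟩ := hv
    refine ⟨classSize x, hx ▸ classSize_dvd_sameSizeCount x, ?_, hx⟩
    intro h2
    have h3 := h2.trans (classSize_dvd_card x)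
    rw [Nat.odd_iff] at hodd
    omega
  have hcop : ∀ n : ℕ, ¬ 2 ∣ n → Nat.Coprime n 2 := by
    intro n hn
    exact (Nat.prime_two.coprime_iff_not_dvd.mpr hn).symm
  -- v = 2q forces class size q
  obtain ⟨n, hdvd, hn2, hcount⟩ := key (2 * q) (by simp)
  have hnq : n ∣ q := (hcop n hn2).dvd_of_dvd_mul_left hdvd
  have hq2 := hq.two_le
  rcases hq.eq_one_or_self_of_dvd n hnq with h1 | h1
  · rw [h1, hc1] at hcount; omega
  rw [h1] at hcount
  -- v = 8q also forces class size q
  obtain ⟨n', hdvd', hn2', hcount'⟩ := key (8 * q) (by simp)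
  have hn'q : n' ∣ q := by
    have hcop8 : Nat.Coprime n' 8 := by
      have : (8 : ℕ) = 2 ^ 3 := by norm_num
      rw [this]
      exact (hcop n' hn2').pow_right 3
    exact hcop8.dvd_of_dvd_mul_left hdvd'
  rcases hq.eq_one_or_self_of_dvd n' hn'q with h2 | h2
  · rw [h2, hc1] at hcount'; omega
  · rw [h2, ← hcount] at hcount'; omega
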